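/- arXiv:2604.07904 — 4 statements merged into one kernel-verified Lean document; each statement's English description precedes it below -/
import Mathlib

section
/- Under the token setting with Ŝ_* ⊆ S_* satisfying |Ŝ_*| ≥ (1 − ξ_φ)|S_*|, if the phase-modulated logit gap satisfies Δ_a ≥ log(|S_¬*| / ((1 − ξ_φ)|S_*|)) + log(1/ε), then the total attention mass on the relevant tokens satisfies Σ_{j ∈ S_*} a_{0j} ≥ 1 − ε. -/
/-!
Bounding the irrelevant exponentials from above by the largest logit `M` and the good ones from
below by the smallest logit `m` gives `∑_{S_¬*} e^{s} ≤ |S_¬*| e^M` and `|Ŝ_*| e^m ≤ ∑_{Ŝ_*} e^{s}`.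
Exponentiating the gap condition, `|S_¬*| e^M ≤ ε (1 − ξ_φ)|S_*| e^m ≤ ε |Ŝ_*| e^m`, so the
irrelevant tokens carry at most an `ε` fraction of the partition function.
-/

open Finset Real

namespace Finset

variable {ι : Type*} [DecidableEq ι]

lemma sum_union_le_sum_add_sum {f : ι → ℝ} (hf : ∀ i, 0 ≤ f i) (A B : Finset ι) :
    ∑ i ∈ A ∪ B, f i ≤ ∑ i ∈ A, f i + ∑ i ∈ B, f i := by
  rw [← sum_union_inter]
  exact le_add_of_nonneg_right (sum_nonneg fun i _ ↦ hf i)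

lemma one_sub_le_sum_div_sum_union {f : ι → ℝ} (hf : ∀ i, 0 ≤ f i) {A B : Finset ι} {ε : ℝ}
    (hpos : 0 < ∑ i ∈ A ∪ B, f i) (hB : ∑ i ∈ B, f i ≤ ε * ∑ i ∈ A ∪ B, f i) :
    1 - ε ≤ (∑ i ∈ A, f i) / ∑ i ∈ A ∪ B, f i := by
  rw [le_div_iff₀ hpos]
  linarith [sum_union_le_sum_add_sum hf A B]

end Finset

namespace Real

lemma mul_exp_le_mul_exp_of_log_add_log_inv_le {x ε M m : ℝ} (hx : 0 < x) (hε : 0 < ε)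
    (h : log x + log (1 / ε) ≤ m - M) : x * exp M ≤ ε * exp m := by
  rw [← log_mul hx.ne' (by positivity), log_le_iff_le_exp (by positivity), exp_sub,
    le_div_iff₀ (exp_pos M)] at h
  calc x * exp M = ε * (x * (1 / ε) * exp M) := by field_simp
    _ ≤ ε * exp m := by gcongr

lemma sum_exp_le_mul_sum_exp_of_logit_gap {ι : Type*} {T N : Finset ι} (hT : T.Nonempty)
    (hN : N.Nonempty) {s : ι → ℝ} {K ε : ℝ} (hK : 0 < K) (hKT : K ≤ #T) (hε : 0 < ε)
    (hgap : log (#N / K) + log (1 / ε) ≤ T.inf' hT s - N.sup' hN s) :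
    ∑ i ∈ N, exp (s i) ≤ ε * ∑ i ∈ T, exp (s i) := by
  have hNcard : (0 : ℝ) < #N := by exact_mod_cast hN.card_pos
  have hweighted : #N * exp (N.sup' hN s) ≤ ε * (K * exp (T.inf' hT s)) := by
    have := mul_exp_le_mul_exp_of_log_add_log_inv_le (by positivity) hε hgap
    rw [div_mul_eq_mul_div, div_le_iff₀ hK] at this
    linarith
  calc ∑ i ∈ N, exp (s i) ≤ #N * exp (N.sup' hN s) := by
        simpa using sum_le_card_nsmul N _ _ fun i hi ↦ exp_le_exp.2 (le_sup' s hi)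
    _ ≤ ε * (K * exp (T.inf' hT s)) := hweighted
    _ ≤ ε * (#T * exp (T.inf' hT s)) := by gcongr
    _ ≤ ε * ∑ i ∈ T, exp (s i) := by
        gcongr
        simpa using card_nsmul_le_sum T _ _ fun i hi ↦ exp_le_exp.2 (inf'_le s hi)

end Real

theorem attention_concentration_of_gap_general
    {ι : Type*} [DecidableEq ι]
    (Sstar Snot : Finset ι) (hSnot : Snot.Nonempty)
    (Shat : Finset ι) (hsub : Shat ⊆ Sstar) (hShat : Shat.Nonempty)
    (ξφ ε : ℝ) (hξ1 : ξφ < 1) (hε : 0 < ε)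
    -- logits and softmax attention weights
    (s : ι → ℝ) (a : ι → ℝ)
    (ha : ∀ j, a j = Real.exp (s j) / ∑ l ∈ Sstar ∪ Snot, Real.exp (s l))
    -- |Ŝ_*| ≥ (1 − ξ_φ)|S_*|
    (hcard : (1 - ξφ) * (Sstar.card : ℝ) ≤ (Shat.card : ℝ))
    -- the gap condition on Δ_a
    (hgap : Shat.inf' hShat s - Snot.sup' hSnot s
        ≥ Real.log ((Snot.card : ℝ) / ((1 - ξφ) * (Sstar.card : ℝ)))
          + Real.log (1 / ε)) :
    ∑ j ∈ Sstar, a j ≥ 1 - ε := by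
  have hShat_union : Shat ⊆ Sstar ∪ Snot := hsub.trans subset_union_left
  have hK : 0 < (1 - ξφ) * (#Sstar : ℝ) :=
    mul_pos (by linarith) (by exact_mod_cast (hShat.mono hsub).card_pos)
  have hZ : 0 < ∑ l ∈ Sstar ∪ Snot, exp (s l) :=
    sum_pos (fun _ _ ↦ exp_pos _) (hShat.mono hShat_union)
  have htail : ∑ l ∈ Snot, exp (s l) ≤ ε * ∑ l ∈ Sstar ∪ Snot, exp (s l) :=
    (sum_exp_le_mul_sum_exp_of_logit_gap hShat hSnot hK hcard hε hgap).trans <| by gcongr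
  rw [sum_congr rfl fun j _ ↦ ha j, ← sum_div]
  exact one_sub_le_sum_div_sum_union (fun _ ↦ (exp_pos _).le) hZ htail

/-- if `|Ŝ_*| ≥ (1 − ξ_φ)|S_*|` and the phase-modulated logit gap
satisfies `Δ_a ≥ log(|S_¬*| / ((1 − ξ_φ)|S_*|)) + log(1/ε)`, then the total
attention mass on the relevant tokens satisfies `Σ_{j ∈ S_*} a_{0j} ≥ 1 − ε`. -/
theorem attention_concentration_of_gap
    {ι : Type*} [DecidableEq ι]
    (Sstar Snot : Finset ι) (hSstar : Sstar.Nonempty) (hSnot : Snot.Nonempty)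
    (hdisj : Disjoint Sstar Snot)
    (Shat : Finset ι) (hsub : Shat ⊆ Sstar) (hShat : Shat.Nonempty)
    (ξφ ε : ℝ) (hξ0 : 0 ≤ ξφ) (hξ1 : ξφ < 1) (hε : 0 < ε)
    -- logits and softmax attention weights
    (s : ι → ℝ) (a : ι → ℝ)
    (ha : ∀ j, a j = Real.exp (s j) / ∑ l ∈ Sstar ∪ Snot, Real.exp (s l))
    -- |Ŝ_*| ≥ (1 − ξ_φ)|S_*|
    (hcard : (1 - ξφ) * (Sstar.card : ℝ) ≤ (Shat.card : ℝ))
    -- the gap condition on Δ_a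
    (hgap : Shat.inf' hShat s - Snot.sup' hSnot s
        ≥ Real.log ((Snot.card : ℝ) / ((1 - ξφ) * (Sstar.card : ℝ)))
          + Real.log (1 / ε)) :
    ∑ j ∈ Sstar, a j ≥ 1 - ε :=
  attention_concentration_of_gap_general Sstar Snot hSnot Shat hsub hShat ξφ ε hξ1 hε s a ha hcard
    hgap
end

section
/- Under the token setting with Ŝ_* ⊆ S_* nonempty, the attention mass on the relevant tokens admits the lower bound Σ_{j ∈ S_*} a_{0j} ≥ 1 / (1 + (|S_¬*| / |Ŝ_*|) · exp(−(min_{j∈Ŝ_*} s_{0j} − max_{r∈S_¬*} s_{0r}))). -/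
/-- the attention mass on the relevant tokens admits the lower bound
`Σ_{j ∈ S_*} a_{0j} ≥ 1 / (1 + (|S_¬*| / |Ŝ_*|) · exp(−(min_{j∈Ŝ_*} s_{0j} − max_{r∈S_¬*} s_{0r})))`. -/
theorem attention_mass_lower_bound
    {ι : Type*} [DecidableEq ι]
    (Sstar Snot : Finset ι) (hSstar : Sstar.Nonempty) (hSnot : Snot.Nonempty)
    (hdisj : Disjoint Sstar Snot)
    (Shat : Finset ι) (hsub : Shat ⊆ Sstar) (hShat : Shat.Nonempty)
    -- logits and softmax attention weights
    (s : ι → ℝ) (a : ι → ℝ)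
    (ha : ∀ j, a j = Real.exp (s j) / ∑ l ∈ Sstar ∪ Snot, Real.exp (s l)) :
    ∑ j ∈ Sstar, a j
      ≥ 1 / (1 + ((Snot.card : ℝ) / (Shat.card : ℝ))
          * Real.exp (-(Shat.inf' hShat s - Snot.sup' hSnot s))) := by
  set A : ℝ := ∑ j ∈ Sstar, Real.exp (s j) with hA
  set B : ℝ := ∑ j ∈ Snot, Real.exp (s j) with hB
  set μ : ℝ := Shat.inf' hShat s
  set M : ℝ := Snot.sup' hSnot s
  have hApos : 0 < A := Finset.sum_pos (fun i _ => Real.exp_pos _) hSstar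
  have hBpos : 0 < B := Finset.sum_pos (fun i _ => Real.exp_pos _) hSnot
  have hm : (0 : ℝ) < Shat.card := by exact_mod_cast Finset.card_pos.mpr hShat
  have hsum : ∑ l ∈ Sstar ∪ Snot, Real.exp (s l) = A + B :=
    Finset.sum_union hdisj
  have hLHS : ∑ j ∈ Sstar, a j = A / (A + B) := by
    simp only [ha, hsum]
    rw [← Finset.sum_div]
  rw [hLHS]
  -- key bounds
  have hAlow : (Shat.card : ℝ) * Real.exp μ ≤ A := by
    calc (Shat.card : ℝ) * Real.exp μ = ∑ j ∈ Shat, Real.exp μ := by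
          rw [Finset.sum_const, nsmul_eq_mul]
      _ ≤ ∑ j ∈ Shat, Real.exp (s j) :=
          Finset.sum_le_sum fun j hj =>
            Real.exp_le_exp.mpr (Finset.inf'_le _ hj)
      _ ≤ A := Finset.sum_le_sum_of_subset_of_nonneg hsub
            (fun i _ _ => (Real.exp_pos _).le)
  have hBup : B ≤ (Snot.card : ℝ) * Real.exp M := by
    calc B ≤ ∑ j ∈ Snot, Real.exp M :=
          Finset.sum_le_sum fun j hj =>
            Real.exp_le_exp.mpr (Finset.le_sup' _ hj)
      _ = (Snot.card : ℝ) * Real.exp M := by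
          rw [Finset.sum_const, nsmul_eq_mul]
  have hBA : B / A ≤ ((Snot.card : ℝ) / (Shat.card : ℝ)) * Real.exp (-(μ - M)) := by
    rw [div_le_iff₀ hApos]
    calc B ≤ (Snot.card : ℝ) * Real.exp M := hBup
      _ = ((Snot.card : ℝ) / (Shat.card : ℝ)) * Real.exp (-(μ - M)) *
            ((Shat.card : ℝ) * Real.exp μ) := by
          rw [Real.exp_neg, Real.exp_sub]
          field_simp
      _ ≤ _ := by
          refine mul_le_mul_of_nonneg_left hAlow ?_
          positivity
  have key : A / (A + B) = 1 / (1 + B / A) := by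
    rw [one_add_div hApos.ne']
    rw [one_div_div]
  rw [ge_iff_le, key]
  apply one_div_le_one_div_of_le
  · positivity
  · linarith
end

section
/- Under the token setting and synchronization assumptions (A1), (A2), (A3), if the content-only logit gap satisfies Δ ≥ log(|S_¬*|/|S_*|) + log(1/ε) − (f_a(γ_φ) − f_a(ρ_φ) + log(1 − ξ_φ)), then the total attention mass on the relevant tokens satisfies Σ_{j ∈ S_*} a_{0j} ≥ 1 − ε. -/
/-!
Split the softmax normaliser into the mass `A` on `S_*` and the mass `B` on `S_¬*`; the relevant
mass is `A / (A + B)`, which is at least `1 - ε` as soon as `B ≤ ε A`. Every logit in `S_¬*` is at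
most `max ⟨q₀, k_r⟩ + f_a(ρ_φ)`, so `B ≤ |S_¬*| e^{max ⟨q₀, k_r⟩ + f_a(ρ_φ)}`, while the at least
`(1 - ξ_φ)|S_*|` tokens of `Ŝ_*` have logit at least `min ⟨q₀, k_j⟩ + f_a(γ_φ)`, so
`A ≥ (1 - ξ_φ)|S_*| e^{min ⟨q₀, k_j⟩ + f_a(γ_φ)}`. Exponentiating the gap condition is exactly the
comparison of these two bounds with factor `ε`.
-/

open Real Finset

lemma one_sub_le_div_add {A B ε : ℝ} (hA : 0 < A) (hB : 0 ≤ B) (hε : 0 ≤ ε)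
    (h : B ≤ ε * A) : 1 - ε ≤ A / (A + B) := by
  rw [le_div_iff₀ (by linarith)]
  nlinarith [mul_nonneg hε hB]

lemma one_sub_le_sum_div_sum_union {ι : Type*} [DecidableEq ι] {S T : Finset ι}
    (hST : Disjoint S T) {w : ι → ℝ} {ε : ℝ} (hS : 0 < ∑ i ∈ S, w i)
    (hT : ∀ i ∈ T, 0 ≤ w i) (hε : 0 ≤ ε) (h : ∑ i ∈ T, w i ≤ ε * ∑ i ∈ S, w i) :
    1 - ε ≤ ∑ j ∈ S, w j / ∑ l ∈ S ∪ T, w l := by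
  rw [← Finset.sum_div, Finset.sum_union hST]
  exact one_sub_le_div_add hS (Finset.sum_nonneg hT) hε h

lemma card_mul_exp_le_sum_exp_of_subset {ι : Type*} {s t : Finset ι} (hst : s ⊆ t)
    {f : ι → ℝ} {c : ℝ} (hc : ∀ i ∈ s, c ≤ f i) :
    s.card * exp c ≤ ∑ i ∈ t, exp (f i) :=
  calc (s.card : ℝ) * exp c ≤ ∑ i ∈ s, exp (f i) := by
        simpa using Finset.card_nsmul_le_sum s _ _ fun i hi => exp_le_exp.2 (hc i hi)
    _ ≤ ∑ i ∈ t, exp (f i) :=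
        Finset.sum_le_sum_of_subset_of_nonneg hst fun i _ _ => (exp_pos _).le

lemma sum_exp_le_card_mul_exp {ι : Type*} {s : Finset ι} {f : ι → ℝ} {c : ℝ}
    (hc : ∀ i ∈ s, f i ≤ c) : ∑ i ∈ s, exp (f i) ≤ s.card * exp c := by
  simpa using Finset.sum_le_card_nsmul s _ _ fun i hi => exp_le_exp.2 (hc i hi)

lemma mul_exp_le_mul_mul_exp_of_log_le {p q ε u v : ℝ} (hp : 0 < p) (hq : 0 < q) (hε : 0 < ε)
    (h : log (p / q) + log (1 / ε) ≤ u - v) : p * exp v ≤ ε * (q * exp u) := by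
  rw [← log_mul (by positivity) (by positivity), log_le_iff_le_exp (by positivity),
    exp_sub, le_div_iff₀ (exp_pos v)] at h
  calc p * exp v = ε * q * (p / q * (1 / ε) * exp v) := by field_simp
    _ ≤ ε * q * exp u := by gcongr
    _ = ε * (q * exp u) := by ring

theorem attention_concentration_relaxed_condition_general
    {ι : Type*} [DecidableEq ι] {d : ℕ}
    (Sstar Snot : Finset ι) (hSstar : Sstar.Nonempty) (hSnot : Snot.Nonempty)
    (hdisj : Disjoint Sstar Snot)
    (Shat : Finset ι) (hsub : Shat ⊆ Sstar)
    (q0 : EuclideanSpace ℝ (Fin d)) (k : ι → EuclideanSpace ℝ (Fin d))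
    (φ0 : ℝ) (φ : ι → ℝ)
    (fa : ℝ → ℝ) (hfa : Monotone fa)
    (γφ ρφ ξφ ε : ℝ) (hξ1 : ξφ < 1) (hε : 0 < ε)
    -- (A1) within-cluster tightness
    (hA1 : ∀ j ∈ Shat, γφ ≤ Real.cos (φ0 - φ j))
    -- (A2) inter-cluster separation
    (hA2 : ∀ r ∈ Snot, Real.cos (φ0 - φ r) ≤ ρφ)
    -- (A3) cluster–label consistency: |Ŝ_*| ≥ (1 − ξ_φ)|S_*|
    (hA3 : (1 - ξφ) * (Sstar.card : ℝ) ≤ (Shat.card : ℝ))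
    -- phase-modulated logits and softmax attention weights
    (s : ι → ℝ)
    (hs : ∀ j, s j = (inner ℝ q0 (k j) : ℝ) + fa (Real.cos (φ0 - φ j)))
    (a : ι → ℝ)
    (ha : ∀ j, a j = Real.exp (s j) / ∑ l ∈ Sstar ∪ Snot, Real.exp (s l))
    -- the relaxed condition on the content-only logit gap Δ
    (hgap : Sstar.inf' hSstar (fun j => (inner ℝ q0 (k j) : ℝ))
        - Snot.sup' hSnot (fun r => (inner ℝ q0 (k r) : ℝ))
      ≥ Real.log ((Snot.card : ℝ) / (Sstar.card : ℝ)) + Real.log (1 / ε)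
        - (fa γφ - fa ρφ + Real.log (1 - ξφ))) :
    ∑ j ∈ Sstar, a j ≥ 1 - ε := by
  set m := Sstar.inf' hSstar fun j => (inner ℝ q0 (k j) : ℝ)
  set M := Snot.sup' hSnot fun r => (inner ℝ q0 (k r) : ℝ)
  have hS : (0 : ℝ) < Sstar.card := by exact_mod_cast hSstar.card_pos
  have hN : (0 : ℝ) < Snot.card := by exact_mod_cast hSnot.card_pos
  have hξ : 0 < 1 - ξφ := sub_pos.2 hξ1
  have hmass_star : (1 - ξφ) * Sstar.card * exp (m + fa γφ) ≤ ∑ j ∈ Sstar, exp (s j) :=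
    (mul_le_mul_of_nonneg_right hA3 (exp_pos _).le).trans <|
      card_mul_exp_le_sum_exp_of_subset hsub fun j hj =>
        hs j ▸ add_le_add (Finset.inf'_le _ (hsub hj)) (hfa (hA1 j hj))
  have hmass_not : ∑ r ∈ Snot, exp (s r) ≤ Snot.card * exp (M + fa ρφ) :=
    sum_exp_le_card_mul_exp fun r hr =>
      hs r ▸ add_le_add (Finset.le_sup' (fun r => (inner ℝ q0 (k r) : ℝ)) hr) (hfa (hA2 r hr))
  have hcompare : Snot.card * exp (M + fa ρφ) ≤ ε * ((1 - ξφ) * Sstar.card * exp (m + fa γφ)) := by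
    refine mul_exp_le_mul_mul_exp_of_log_le hN (by positivity) hε ?_
    rw [log_div hN.ne' (by positivity), log_mul hξ.ne' hS.ne']
    rw [log_div hN.ne' hS.ne'] at hgap
    linarith
  rw [Finset.sum_congr rfl fun j _ => ha j]
  exact one_sub_le_sum_div_sum_union hdisj (Finset.sum_pos (fun j _ => exp_pos _) hSstar)
    (fun r _ => (exp_pos _).le) hε.le (hmass_not.trans (hcompare.trans (by gcongr)))

/-- under (A1), (A2), (A3), if the content-only logit gap satisfies
`Δ ≥ log(|S_¬*|/|S_*|) + log(1/ε) − (f_a(γ_φ) − f_a(ρ_φ) + log(1 − ξ_φ))`, then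
the total attention mass on relevant tokens satisfies `Σ_{j ∈ S_*} a_{0j} ≥ 1 − ε`. -/
theorem attention_concentration_relaxed_condition
    {ι : Type*} [DecidableEq ι] {d : ℕ}
    (Sstar Snot : Finset ι) (hSstar : Sstar.Nonempty) (hSnot : Snot.Nonempty)
    (hdisj : Disjoint Sstar Snot)
    (Shat : Finset ι) (hsub : Shat ⊆ Sstar) (hShat : Shat.Nonempty)
    (q0 : EuclideanSpace ℝ (Fin d)) (k : ι → EuclideanSpace ℝ (Fin d))
    (φ0 : ℝ) (φ : ι → ℝ)
    (fa : ℝ → ℝ) (hfa : Monotone fa)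
    (γφ ρφ ξφ ε : ℝ) (hξ0 : 0 ≤ ξφ) (hξ1 : ξφ < 1) (hε : 0 < ε)
    -- (A1) within-cluster tightness
    (hA1 : ∀ j ∈ Shat, γφ ≤ Real.cos (φ0 - φ j))
    -- (A2) inter-cluster separation
    (hA2 : ∀ r ∈ Snot, Real.cos (φ0 - φ r) ≤ ρφ)
    -- (A3) cluster–label consistency: |Ŝ_*| ≥ (1 − ξ_φ)|S_*|
    (hA3 : (1 - ξφ) * (Sstar.card : ℝ) ≤ (Shat.card : ℝ))
    -- phase-modulated logits and softmax attention weights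
    (s : ι → ℝ)
    (hs : ∀ j, s j = (inner ℝ q0 (k j) : ℝ) + fa (Real.cos (φ0 - φ j)))
    (a : ι → ℝ)
    (ha : ∀ j, a j = Real.exp (s j) / ∑ l ∈ Sstar ∪ Snot, Real.exp (s l))
    -- the relaxed condition on the content-only logit gap Δ
    (hgap : Sstar.inf' hSstar (fun j => (inner ℝ q0 (k j) : ℝ))
        - Snot.sup' hSnot (fun r => (inner ℝ q0 (k r) : ℝ))
      ≥ Real.log ((Snot.card : ℝ) / (Sstar.card : ℝ)) + Real.log (1 / ε)
        - (fa γφ - fa ρφ + Real.log (1 - ξφ))) :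
    ∑ j ∈ Sstar, a j ≥ 1 - ε :=
  attention_concentration_relaxed_condition_general Sstar Snot hSstar hSnot hdisj Shat hsub q0 k φ0
    φ fa hfa γφ ρφ ξφ ε hξ1 hε hA1 hA2 hA3 s hs a ha hgap
end

section
/- For the Kuramoto model with symmetric coupling matrix J and common natural frequency ω, the energy along any solution is non-increasing: the function t ↦ U(φ(t)) = Σ_{i,j} J i j · (1 − cos(φ_i(t) − φ_j(t))) is monotone non-increasing in t, i.e., the Kuramoto dynamics is Lyapunov with energy U. -/
/-!
Write `S i = ∑ j, J i j * sin (φ i - φ j)` for the coupling torque on oscillator `i`, so that the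
Kuramoto equation reads `φ̇ i = ω - S i`. Differentiating the energy gives
`U̇ = ∑ i, ∑ j, J i j * sin (φ i - φ j) * (φ̇ i - φ̇ j)`. The kernel `J i j * sin (φ i - φ j)` is
antisymmetric because `J` is symmetric, so this double sum equals `2 * ∑ i, S i * φ̇ i`, and the
common frequency `ω` drops out: `U̇ = -2 * ∑ i, S i ^ 2 ≤ 0`.
-/

open Real Finset

theorem sum_sum_mul_sub_of_antisymm {ι R : Type*} [Fintype ι] [CommRing R] (K : ι → ι → R)
    (hK : ∀ i j, K j i = -K i j) (v : ι → R) :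
    ∑ i, ∑ j, K i j * (v i - v j) = 2 * ∑ i, (∑ j, K i j) * v i := by
  have hswap : ∑ i, ∑ j, K i j * v j = -∑ i, ∑ j, K i j * v i := by
    rw [sum_comm, ← sum_neg_distrib]
    refine sum_congr rfl fun i _ => ?_
    rw [← sum_neg_distrib]
    exact sum_congr rfl fun j _ => by rw [hK]; ring
  simp only [mul_sub, sum_sub_distrib, hswap, sum_mul]
  ring

section Kuramoto

variable {ι : Type*} [Fintype ι]

noncomputable def kuramotoEnergy (J : ι → ι → ℝ) (θ : ι → ℝ) : ℝ :=
  ∑ i, ∑ j, J i j * (1 - cos (θ i - θ j))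

noncomputable def couplingTorque (J : ι → ι → ℝ) (θ : ι → ℝ) (i : ι) : ℝ :=
  ∑ j, J i j * sin (θ i - θ j)

theorem hasDerivAt_kuramotoEnergy (J : ι → ι → ℝ) {φ φ' : ι → ℝ → ℝ} {t : ℝ}
    (hφ : ∀ i, HasDerivAt (φ i) (φ' i t) t) :
    HasDerivAt (fun s => kuramotoEnergy J (fun i => φ i s))
      (∑ i, ∑ j, J i j * sin (φ i t - φ j t) * (φ' i t - φ' j t)) t := by
  refine HasDerivAt.fun_sum fun i _ => HasDerivAt.fun_sum fun j _ => ?_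
  exact ((((hφ i).fun_sub (hφ j)).cos.const_sub 1).const_mul (J i j)).congr_deriv (by ring)

theorem sum_mul_sin_sub_eq_neg_couplingTorque (J : ι → ι → ℝ) (θ : ι → ℝ) (i : ι) :
    ∑ j, J i j * sin (θ j - θ i) = -couplingTorque J θ i := by
  simp only [couplingTorque, ← sum_neg_distrib, ← mul_neg, ← sin_neg, neg_sub]

theorem sum_sum_mul_sin_mul_sub_eq (J : ι → ι → ℝ) (hJ : ∀ i j, J i j = J j i) (θ v : ι → ℝ) :
    ∑ i, ∑ j, J i j * sin (θ i - θ j) * (v i - v j) = 2 * ∑ i, couplingTorque J θ i * v i := by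
  refine sum_sum_mul_sub_of_antisymm (fun i j => J i j * sin (θ i - θ j)) (fun i j => ?_) v
  rw [hJ, ← neg_sub, sin_neg, mul_neg]

theorem sum_couplingTorque_eq_zero (J : ι → ι → ℝ) (hJ : ∀ i j, J i j = J j i) (θ : ι → ℝ) :
    ∑ i, couplingTorque J θ i = 0 := by
  simpa using (sum_sum_mul_sin_mul_sub_eq J hJ θ 1).symm

end Kuramoto

/-- for the Kuramoto model with symmetric coupling matrix `J` and
common natural frequency `ω`, the energy
`U(φ(t)) = Σ_{i,j} J i j · (1 − cos(φ_i(t) − φ_j(t)))` is monotone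
non-increasing along any solution, i.e., the Kuramoto dynamics is Lyapunov. -/
theorem kuramoto_energy_antitone
    {n : ℕ} (J : Fin n → Fin n → ℝ) (hJ : ∀ i j, J i j = J j i) (ω : ℝ)
    (φ : Fin n → ℝ → ℝ)
    -- each phase is differentiable and satisfies the Kuramoto ODE
    (hode : ∀ i t, HasDerivAt (φ i)
      (ω + ∑ j, J i j * Real.sin (φ j t - φ i t)) t) :
    Antitone (fun t => ∑ i, ∑ j, J i j * (1 - Real.cos (φ i t - φ j t))) := by
  set S : ℝ → Fin n → ℝ := fun t => couplingTorque J (fun i => φ i t)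
  have hvel : ∀ i t, HasDerivAt (φ i) (ω - S t i) t := fun i t => by
    simpa only [sum_mul_sin_sub_eq_neg_couplingTorque, ← sub_eq_add_neg] using hode i t
  have hrate : ∀ t, HasDerivAt (fun s => kuramotoEnergy J (fun i => φ i s))
      (-2 * ∑ i, S t i ^ 2) t := fun t => by
    convert hasDerivAt_kuramotoEnergy J (φ' := fun i t => ω - S t i) (hvel · t) using 1
    rw [sum_sum_mul_sin_mul_sub_eq J hJ _ (fun i => ω - S t i)]
    simp only [mul_sub, sum_sub_distrib, ← sum_mul, S, sum_couplingTorque_eq_zero J hJ, sq]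
    ring
  exact antitone_of_hasDerivAt_nonpos hrate fun t =>
    mul_nonpos_of_nonpos_of_nonneg (by norm_num) (sum_nonneg fun i _ => sq_nonneg _)
end
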